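/- arXiv:1001.1929 — 2 statements merged into one kernel-verified Lean document; each statement's English description precedes it below -/
import Mathlib

section
/- Let f, h ∈ k[[u]] be nonzero power series with lowest coefficients f_ℓ, h_m, and suppose v(f) ≥ v(h) and (p−1) divides v(f) − v(h); set j = (v(f) − v(h))/(p−1). Then every nonzero g ∈ k[[u]] with f·g = g^p·h has u-adic order j, and the map sending such a g to its coefficient in degree j is a bijection from the set { g ∈ k[[u]] : g ≠ 0 and f·g = g^p·h } onto the set { x ∈ k : x ≠ 0 and x^{p−1}·h_m = f_ℓ }. In particular, for each fixed value of the degree-j coefficient the solution g is unique. -/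
/-!
Comparing `u`-adic orders in `f g = g^p h` forces `v(g) = j`. Dividing out the powers of `u`
turns the equation into `F G = G^p H` with `F, H, G` units, i.e. `G^(p-1) = F / H`; since `p - 1`
is invertible in `k`, Hensel's lemma in the complete ring `k[[u]]` lifts every admissible constant
term `x` to such a `G`. Uniqueness holds because Frobenius is additive, so the difference of two
solutions with the same degree-`j` coefficient is a solution of order `> j`, hence zero.
-/

open PowerSeries

theorem mul_sub_eq_sub_pow_mul {A : Type*} [CommRing A] {p : ℕ} [Fact p.Prime] [CharP A p]
    {f h g₁ g₂ : A} (h₁ : f * g₁ = g₁ ^ p * h) (h₂ : f * g₂ = g₂ ^ p * h) :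
    f * (g₁ - g₂) = (g₁ - g₂) ^ p * h := by
  rw [mul_sub, h₁, h₂, sub_pow_char, sub_mul]

namespace PowerSeries

section Domain

variable {R : Type*} [CommRing R] [IsDomain R]

theorem order_eq_of_mul_eq_pow_mul {p vf vh j : ℕ} (hp : 1 < p) {f h g : R⟦X⟧}
    (hf : f.order = vf) (hh : h.order = vh) (hj : vf + j = p * j + vh)
    (hg : g ≠ 0) (hfgh : f * g = g ^ p * h) : g.order = j := by
  obtain ⟨d, hd⟩ := ENat.ne_top_iff_exists.mp (order_eq_top.not.mpr hg)
  have hvd : vf + d = p * d + vh := by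
    have := congrArg order hfgh
    rw [order_mul, order_mul, order_pow, nsmul_eq_mul, hf, hh, ← hd] at this
    exact_mod_cast this
  have hdj : (p - 1) * d = (p - 1) * j := by
    zify [hp.le] at hvd hj ⊢
    linear_combination hj - hvd
  rw [← hd, Nat.eq_of_mul_eq_mul_left (Nat.sub_pos_of_lt hp) hdj]

theorem coeff_pow_sub_one_mul_eq_of_mul_eq_pow_mul {p vf vh j : ℕ} (hp : 0 < p)
    {f h g : R⟦X⟧} (hf : f.order = vf) (hh : h.order = vh) (hg : g.order = j)
    (hfgh : f * g = g ^ p * h) : coeff j g ^ (p - 1) * coeff vh h = coeff vf f := by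
  have hlow := congrArg (fun φ => constantCoeff (divXPowOrder φ)) hfgh
  simp only [divXPowOrder_mul, divXPowOrder_pow, map_mul, map_pow,
    constantCoeff_divXPowOrder, hf, hh, hg, ENat.toNat_natCast] at hlow
  have hgj : coeff j g ≠ 0 := (order_eq_nat.mp hg).1
  apply mul_right_cancel₀ hgj
  rw [hlow, mul_right_comm, ← pow_succ, Nat.sub_add_cancel hp]

end Domain

theorem mul_X_pow_mul_eq_pow_mul {R : Type*} [CommSemiring R] {p vf vh j : ℕ}
    (hj : vf + j = p * j + vh) {f h G : R⟦X⟧} (hf : f.order = vf) (hh : h.order = vh)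
    (hG : divXPowOrder f * G = G ^ p * divXPowOrder h) :
    f * (X ^ j * G) = (X ^ j * G) ^ p * h := by
  rw [← X_pow_order_mul_divXPowOrder (f := f), ← X_pow_order_mul_divXPowOrder (f := h), hf, hh,
    ENat.toNat_natCast, ENat.toNat_natCast]
  calc _ = X ^ (vf + j) * (divXPowOrder f * G) := by ring
    _ = X ^ (p * j + vh) * (G ^ p * divXPowOrder h) := by rw [hj, hG]
    _ = _ := by ring

theorem exists_pow_eq_of_constantCoeff_eq_pow {k : Type*} [Field k] {n : ℕ} (hn : (n : k) ≠ 0)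
    {c : k⟦X⟧} {x : k} (hx : x ≠ 0) (hc : constantCoeff c = x ^ n) :
    ∃ G : k⟦X⟧, G ^ n = c ∧ constantCoeff G = x := by
  have hn0 : n ≠ 0 := by rintro rfl; exact hn Nat.cast_zero
  obtain ⟨G, hroot, hGx⟩ := HenselianRing.is_henselian (I := Ideal.span {(X : k⟦X⟧)})
    (Polynomial.X ^ n - Polynomial.C c) (Polynomial.monic_X_pow_sub_C c hn0) (C x)
    (by simp [Ideal.mem_span_singleton, X_dvd_iff, hc])
    (by
      refine IsUnit.map _ ?_
      simp only [Polynomial.derivative_sub, Polynomial.derivative_X_pow, Polynomial.derivative_C,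
        sub_zero, Polynomial.eval_mul, Polynomial.eval_C, Polynomial.eval_pow, Polynomial.eval_X,
        ← map_natCast (C (R := k)), ← map_pow, ← map_mul]
      exact (isUnit_iff_ne_zero.mpr (mul_ne_zero hn (pow_ne_zero _ hx))).map C)
  refine ⟨G, sub_eq_zero.mp (by simpa using hroot), ?_⟩
  rw [Ideal.mem_span_singleton, X_dvd_iff, map_sub, constantCoeff_C, sub_eq_zero] at hGx
  exact hGx

theorem exists_mul_eq_pow_mul_coeff_eq {k : Type*} [Field k] {p vf vh j : ℕ}
    (hp : ((p - 1 : ℕ) : k) ≠ 0) {f h : k⟦X⟧} (hf : f.order = vf) (hh : h.order = vh)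
    (hj : vf + j = p * j + vh) {x : k} (hx : x ≠ 0)
    (hxe : x ^ (p - 1) * coeff vh h = coeff vf f) :
    ∃ g : k⟦X⟧, g ≠ 0 ∧ f * g = g ^ p * h ∧ coeff j g = x := by
  set F := divXPowOrder f
  set H := divXPowOrder h
  have hF : constantCoeff F = coeff vf f := by
    rw [constantCoeff_divXPowOrder, hf, ENat.toNat_natCast]
  have hH : constantCoeff H = coeff vh h := by
    rw [constantCoeff_divXPowOrder, hh, ENat.toNat_natCast]
  have hH0 : constantCoeff H ≠ 0 := hH ▸ (order_eq_nat.mp hh).1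
  obtain ⟨G, hGc, hGx⟩ := exists_pow_eq_of_constantCoeff_eq_pow hp hx (c := F * H⁻¹)
    (by rw [map_mul, constantCoeff_inv, hF, hH, ← hxe, mul_inv_cancel_right₀ (hH ▸ hH0)])
  have hp1 : 1 ≤ p := Nat.one_le_iff_ne_zero.mpr (by rintro rfl; exact hp Nat.cast_zero)
  have hGcoeff : coeff j (X ^ j * G) = x := by
    rw [coeff_X_pow_mul', if_pos le_rfl, Nat.sub_self, coeff_zero_eq_constantCoeff_apply, hGx]
  refine ⟨X ^ j * G, fun h0 => hx (by rw [← hGcoeff, h0, map_zero]),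
    mul_X_pow_mul_eq_pow_mul hj hf hh ?_, hGcoeff⟩
  rw [← Nat.sub_add_cancel hp1, pow_succ, hGc, mul_right_comm, mul_assoc F,
    PowerSeries.inv_mul_cancel _ hH0, mul_one, mul_comm]

end PowerSeries

theorem cyclic_semilinear_solution_bijection_general
    (p : ℕ) (hp : p.Prime) (k : Type*) [Field k] [CharP k p]
    (f h : PowerSeries k)
    (vf vh j : ℕ)
    (hvf : coeff vf f ≠ 0 ∧ ∀ i < vf, coeff i f = 0)
    (hvh : coeff vh h ≠ 0 ∧ ∀ i < vh, coeff i h = 0)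
    (hj : vf = vh + j * (p - 1)) :
    (∀ g : PowerSeries k, g ≠ 0 → f * g = g ^ p * h →
        (coeff j g ≠ 0 ∧ ∀ i < j, coeff i g = 0)) ∧
    Set.BijOn (fun g => coeff j g)
      {g : PowerSeries k | g ≠ 0 ∧ f * g = g ^ p * h}
      {x : k | x ≠ 0 ∧ x ^ (p - 1) * coeff vh h = coeff vf f} := by
  have hfo : f.order = vf := order_eq_nat.mpr hvf
  have hho : h.order = vh := order_eq_nat.mpr hvh
  have hj' : vf + j = p * j + vh := by
    zify [hp.one_le] at hj ⊢
    linear_combination hj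
  have horder : ∀ g : k⟦X⟧, g ≠ 0 → f * g = g ^ p * h → g.order = j :=
    fun g => order_eq_of_mul_eq_pow_mul hp.one_lt hfo hho hj'
  refine ⟨fun g hg hfgh => order_eq_nat.mp (horder g hg hfgh), ?_, ?_, ?_⟩
  · rintro g ⟨hg, hfgh⟩
    exact ⟨(order_eq_nat.mp (horder g hg hfgh)).1,
      coeff_pow_sub_one_mul_eq_of_mul_eq_pow_mul hp.pos hfo hho (horder g hg hfgh) hfgh⟩
  · rintro g₁ ⟨-, h₁⟩ g₂ ⟨-, h₂⟩ hcoeff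
    have : Fact p.Prime := ⟨hp⟩
    have : CharP k⟦X⟧ p := charP_of_injective_algebraMap (algebraMap k k⟦X⟧).injective p
    by_contra hne
    have hdiff := horder _ (sub_ne_zero.mpr hne) (mul_sub_eq_sub_pow_mul h₁ h₂)
    refine (order_eq_nat.mp hdiff).1 ?_
    rw [map_sub, sub_eq_zero]
    exact hcoeff
  · rintro x ⟨hx, hxe⟩
    have hp1 : ((p - 1 : ℕ) : k) ≠ 0 := by
      rw [Nat.cast_sub hp.one_le, CharP.cast_eq_zero, Nat.cast_one, zero_sub]
      exact neg_ne_zero.mpr one_ne_zero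
    obtain ⟨g, hg, hfgh, hgx⟩ := exists_mul_eq_pow_mul_coeff_eq hp1 hfo hho hj' hx hxe
    exact ⟨g, ⟨hg, hfgh⟩, hgx⟩

/-- **Lemma (uniqueness and parametrization of solutions of `f·g = φ(g)·h`).**
Let `k` be a field of characteristic `p`, and `f, h ∈ k[[u]]` nonzero with `u`-adic orders
`vf, vh` and suppose `vf = vh + j(p−1)` (i.e. `vf ≥ vh`, `(p−1) ∣ vf − vh` and
`j = (vf − vh)/(p−1)`).  Then every nonzero `g` with `f·g = g^p·h` has `u`-adic order `j`,
and `g ↦ (coefficient of g in degree j)` is a bijection from the set of nonzero solutions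
onto `{x ∈ k | x ≠ 0 ∧ x^{p−1}·h_m = f_ℓ}`; in particular the solution is unique for each
fixed degree-`j` coefficient. -/
theorem cyclic_semilinear_solution_bijection
    (p : ℕ) (hp : p.Prime) (k : Type*) [Field k] [CharP k p]
    (f h : PowerSeries k) (hf : f ≠ 0) (hh : h ≠ 0)
    (vf vh j : ℕ)
    (hvf : coeff vf f ≠ 0 ∧ ∀ i < vf, coeff i f = 0)
    (hvh : coeff vh h ≠ 0 ∧ ∀ i < vh, coeff i h = 0)
    (hj : vf = vh + j * (p - 1)) :
    (∀ g : PowerSeries k, g ≠ 0 → f * g = g ^ p * h →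
        (coeff j g ≠ 0 ∧ ∀ i < j, coeff i g = 0)) ∧
    Set.BijOn (fun g => coeff j g)
      {g : PowerSeries k | g ≠ 0 ∧ f * g = g ^ p * h}
      {x : k | x ≠ 0 ∧ x ^ (p - 1) * coeff vh h = coeff vf f} :=
  cyclic_semilinear_solution_bijection_general p hp k f h vf vh j hvf hvh hj
end

section
/- Let E = u^e + p·F₀ be an Eisenstein polynomial of degree e over W, let j₁, j₂ be natural numbers, and let f ∈ W((u)). Set x₁ = p·u^{−j₁} and x₂ = u^{−j₂} + p·f in W((u)). Then: (i) E·φ(x₁) ≡ u^{e−(p−1)j₁}·x₁ (mod p²), and (ii) E·φ(x₂) ≡ u^{−(p−1)j₂}·E·x₂ + (u^{e+j₁}·φ(f) − u^{e+j₁−(p−1)j₂}·f)·x₁ (mod p²). -/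
/-! Both congruences come from exact identities. `φ` is additive, `F`-semilinear for constants
(`φ(c·g) = F(c)·φ(g)`), sends `u^m` to `u^{pm}` and fixes `p`, so `φ(x₁) = p·u^{-pj₁}` and
`φ(x₂) = u^{-pj₂} + p·φ(f)`. Writing `E = u^e + p·F₀` and expanding, every term without a factor
`p²` cancels by exponent bookkeeping alone, leaving `p²·u^{-pj₁}·F₀` in (i) and
`p²·(F₀·φ(f) - u^{-(p-1)j₂}·F₀·f)` in (ii). -/

open PowerSeries

/-- The Frobenius-semilinear map `φ` on the Laurent series ring `W(k)((u))`, sending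
`Σ wᵢ uⁱ` to `Σ F(wᵢ) u^{p·i}`, where `F = WittVector.frobenius`. -/
noncomputable def phiL (p : ℕ) [Fact p.Prime] {k : Type*} [CommRing k]
    (g : HahnSeries ℤ (WittVector p k)) : HahnSeries ℤ (WittVector p k) where
  coeff := fun j => if (p : ℤ) ∣ j then WittVector.frobenius (g.coeff (j / p)) else 0
  isPWO_support' := by
    have hsub : (Function.support fun j : ℤ =>
        if (p : ℤ) ∣ j then WittVector.frobenius (g.coeff (j / p)) else 0) ⊆
        (fun i : ℤ => (p : ℤ) * i) '' g.support := by
      intro j hj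
      simp only [Function.mem_support] at hj
      by_cases hd : (p : ℤ) ∣ j
      · refine ⟨j / p, ?_, Int.mul_ediv_cancel' hd⟩
        intro h0
        apply hj
        rw [if_pos hd, h0, map_zero]
      · exact absurd (if_neg hd) hj
    have hmono : Monotone (fun i : ℤ => (p : ℤ) * i) := fun a b hab =>
      mul_le_mul_of_nonneg_left hab (Int.natCast_nonneg p)
    exact (g.isPWO_support.image_of_monotone hmono).mono hsub

section Frobenius

variable (p : ℕ) [Fact p.Prime] {k : Type*} [CommRing k]

lemma phiL_coeff_mul (g : HahnSeries ℤ (WittVector p k)) (i : ℤ) :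
    (phiL p g).coeff (p * i) = WittVector.frobenius (g.coeff i) := by
  have hp : (p : ℤ) ≠ 0 := by exact_mod_cast (Fact.out : p.Prime).ne_zero
  simp [phiL, Int.mul_ediv_cancel_left _ hp]

lemma phiL_coeff_of_not_dvd (g : HahnSeries ℤ (WittVector p k)) {j : ℤ}
    (hj : ¬(p : ℤ) ∣ j) :
    (phiL p g).coeff j = 0 :=
  if_neg hj

lemma phiL_add (g h : HahnSeries ℤ (WittVector p k)) :
    phiL p (g + h) = phiL p g + phiL p h := by
  ext : 1; funext j
  by_cases hd : (p : ℤ) ∣ j <;> simp [phiL, hd]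

lemma phiL_single (m : ℤ) (c : WittVector p k) :
    phiL p (HahnSeries.single m c) =
      HahnSeries.single ((p : ℤ) * m) (WittVector.frobenius c) := by
  have hp : (p : ℤ) ≠ 0 := by exact_mod_cast (Fact.out : p.Prime).ne_zero
  ext : 1; funext j
  by_cases hd : (p : ℤ) ∣ j
  · obtain ⟨i, rfl⟩ := hd
    rw [phiL_coeff_mul]
    by_cases hi : i = m
    · simp [hi]
    · rw [HahnSeries.coeff_single_of_ne hi, map_zero,
        HahnSeries.coeff_single_of_ne fun h => hi (mul_left_cancel₀ hp h)]
  · have hj : j ≠ p * m := fun h => hd ⟨m, h⟩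
    rw [phiL_coeff_of_not_dvd p _ hd, HahnSeries.coeff_single_of_ne hj]

lemma phiL_single_zero_mul (c : WittVector p k) (g : HahnSeries ℤ (WittVector p k)) :
    phiL p (HahnSeries.single 0 c * g) =
      HahnSeries.single 0 (WittVector.frobenius c) * phiL p g := by
  ext : 1; funext j
  by_cases hd : (p : ℤ) ∣ j <;> simp [phiL, hd]

end Frobenius

namespace HahnSeries

variable {R : Type*} [CommRing R]

lemma ofPowerSeries_X_pow_add_C_mul (e : ℕ) (a : R) (F : PowerSeries R) :
    ofPowerSeries ℤ R (PowerSeries.X ^ e + PowerSeries.C a * F) =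
      single (e : ℤ) 1 + single 0 a * ofPowerSeries ℤ R F := by
  rw [map_add, map_mul, ofPowerSeries_X_pow, ofPowerSeries_C, C_apply]

lemma frobenius_relation_one (a : R) (q e j : ℤ) (G : HahnSeries ℤ R) :
    (single e 1 + single 0 a * G) * (single 0 a * single (q * -j) 1) -
        single (e - (q - 1) * j) 1 * (single 0 a * single (-j) 1) =
      single 0 (a ^ 2) * (single (q * -j) 1 * G) := by
  have hu : single e (1 : R) * single (q * -j) 1 =
      single (e - (q - 1) * j) 1 * single (-j) 1 := by
    simp only [single_mul_single, mul_one]; ring_nf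
  have ha : single (0 : ℤ) a * single 0 a = single 0 (a ^ 2) := by
    rw [single_mul_single, add_zero, sq]
  linear_combination single 0 a * hu + single (q * -j) 1 * G * ha

lemma frobenius_relation_two (a : R) (q e j₁ j₂ : ℤ) (G f g : HahnSeries ℤ R) :
    (single e 1 + single 0 a * G) * (single (q * -j₂) 1 + single 0 a * g) -
        (single (-((q - 1) * j₂)) 1 * (single e 1 + single 0 a * G) *
            (single (-j₂) 1 + single 0 a * f) +
          (single (e + j₁) 1 * g - single (e + j₁ - (q - 1) * j₂) 1 * f) *
            (single 0 a * single (-j₁) 1)) =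
      single 0 (a ^ 2) * (G * g - single (-((q - 1) * j₂)) 1 * G * f) := by
  have hφ : single (q * -j₂) (1 : R) = single (-((q - 1) * j₂)) 1 * single (-j₂) 1 := by
    simp only [single_mul_single, mul_one]; ring_nf
  have he : single e (1 : R) = single (e + j₁) 1 * single (-j₁) 1 := by
    simp only [single_mul_single, mul_one]; ring_nf
  have hs : single (-((q - 1) * j₂)) (1 : R) * single e 1 =
      single (e + j₁ - (q - 1) * j₂) 1 * single (-j₁) 1 := by
    simp only [single_mul_single, mul_one]; ring_nf
  have ha : single (0 : ℤ) a * single 0 a = single 0 (a ^ 2) := by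
    rw [single_mul_single, add_zero, sq]
  linear_combination (single e 1 + single 0 a * G) * hφ + single 0 a * g * he -
    single 0 a * f * hs + (G * g - single (-((q - 1) * j₂)) 1 * G * f) * ha

end HahnSeries

theorem rank_two_BK_laurent_identities_general
    (p : ℕ) [Fact p.Prime]
    (k : Type*) [Field k]
    (e : ℕ)
    (F0 : PowerSeries (WittVector p k))
    (j₁ j₂ : ℕ) (f : HahnSeries ℤ (WittVector p k))
    (E x₁ x₂ : HahnSeries ℤ (WittVector p k))
    (hE : E = HahnSeries.ofPowerSeries ℤ (WittVector p k)
        (X ^ e + C (p : WittVector p k) * F0))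
    (hx₁ : x₁ = HahnSeries.single (0 : ℤ) (p : WittVector p k) *
        HahnSeries.single (-(j₁ : ℤ)) (1 : WittVector p k))
    (hx₂ : x₂ = HahnSeries.single (-(j₂ : ℤ)) (1 : WittVector p k) +
        HahnSeries.single (0 : ℤ) (p : WittVector p k) * f) :
    (∀ j : ℤ, (p : WittVector p k) ^ 2 ∣
        (E * phiL p x₁ -
          HahnSeries.single ((e : ℤ) - ((p : ℤ) - 1) * (j₁ : ℤ)) (1 : WittVector p k) * x₁).coeff j) ∧
    (∀ j : ℤ, (p : WittVector p k) ^ 2 ∣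
        (E * phiL p x₂ -
          (HahnSeries.single (-(((p : ℤ) - 1) * (j₂ : ℤ))) (1 : WittVector p k) * E * x₂ +
            (HahnSeries.single ((e : ℤ) + (j₁ : ℤ)) (1 : WittVector p k) * phiL p f -
              HahnSeries.single ((e : ℤ) + (j₁ : ℤ) - ((p : ℤ) - 1) * (j₂ : ℤ))
                (1 : WittVector p k) * f) * x₁)).coeff j) := by
  have hφx₁ : phiL p x₁ =
      HahnSeries.single 0 (p : WittVector p k) * HahnSeries.single ((p : ℤ) * -j₁) 1 := by
    rw [hx₁, phiL_single_zero_mul, phiL_single, map_natCast, map_one]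
  have hφx₂ : phiL p x₂ = HahnSeries.single ((p : ℤ) * -j₂) 1 +
      HahnSeries.single 0 (p : WittVector p k) * phiL p f := by
    rw [hx₂, phiL_add, phiL_single, phiL_single_zero_mul, map_natCast, map_one]
  rw [HahnSeries.ofPowerSeries_X_pow_add_C_mul] at hE
  refine ⟨fun j => ?_, fun j => ?_⟩
  · rw [hφx₁, hE, hx₁, HahnSeries.frobenius_relation_one, HahnSeries.coeff_single_zero_mul]
    exact dvd_mul_right _ _
  · rw [hφx₂, hE, hx₁, hx₂, HahnSeries.frobenius_relation_two,
      HahnSeries.coeff_single_zero_mul]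
    exact dvd_mul_right _ _

/-- **The semilinear identities behind the rank-two Breuil–Kisin modules for `KC_{p²}`.**
Let `W = W(k)` for `k` a perfect field of characteristic `p`, let `E = u^e + p·F₀` be an
Eisenstein polynomial of degree `e ≥ 1` over `W`, let `j₁, j₂ ∈ ℕ` and `f ∈ W((u))`.
Set `x₁ = p·u^{−j₁}` and `x₂ = u^{−j₂} + p·f`.  Then, coefficientwise mod `p²`:
(i)  `E·φ(x₁) ≡ u^{e−(p−1)j₁}·x₁`, and
(ii) `E·φ(x₂) ≡ u^{−(p−1)j₂}·E·x₂ + (u^{e+j₁}·φ(f) − u^{e+j₁−(p−1)j₂}·f)·x₁`. -/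
theorem rank_two_BK_laurent_identities
    (p : ℕ) [Fact p.Prime]
    (k : Type*) [Field k] [CharP k p] [PerfectRing k p]
    (e : ℕ) (he : 1 ≤ e)
    (F0 : PowerSeries (WittVector p k))
    (hF0deg : ∀ i : ℕ, e ≤ i → coeff i F0 = 0)
    (hc0 : IsUnit (constantCoeff F0))
    (j₁ j₂ : ℕ) (f : HahnSeries ℤ (WittVector p k))
    (E x₁ x₂ : HahnSeries ℤ (WittVector p k))
    (hE : E = HahnSeries.ofPowerSeries ℤ (WittVector p k)
        (X ^ e + C (p : WittVector p k) * F0))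
    (hx₁ : x₁ = HahnSeries.single (0 : ℤ) (p : WittVector p k) *
        HahnSeries.single (-(j₁ : ℤ)) (1 : WittVector p k))
    (hx₂ : x₂ = HahnSeries.single (-(j₂ : ℤ)) (1 : WittVector p k) +
        HahnSeries.single (0 : ℤ) (p : WittVector p k) * f) :
    (∀ j : ℤ, (p : WittVector p k) ^ 2 ∣
        (E * phiL p x₁ -
          HahnSeries.single ((e : ℤ) - ((p : ℤ) - 1) * (j₁ : ℤ)) (1 : WittVector p k) * x₁).coeff j) ∧
    (∀ j : ℤ, (p : WittVector p k) ^ 2 ∣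
        (E * phiL p x₂ -
          (HahnSeries.single (-(((p : ℤ) - 1) * (j₂ : ℤ))) (1 : WittVector p k) * E * x₂ +
            (HahnSeries.single ((e : ℤ) + (j₁ : ℤ)) (1 : WittVector p k) * phiL p f -
              HahnSeries.single ((e : ℤ) + (j₁ : ℤ) - ((p : ℤ) - 1) * (j₂ : ℤ))
                (1 : WittVector p k) * f) * x₁)).coeff j) :=
  rank_two_BK_laurent_identities_general p k e F0 j₁ j₂ f E x₁ x₂ hE hx₁ hx₂
end
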